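/- Assume 1 ≤ k < 2k ≤ n, n+1 = kq+p with 0 ≤ p < k, and either (q = 3 and p > 0) or q > 3, and assume d_m^{(⌊m/k⌋)} ≠ 0 for all 0 ≤ m ≤ n−k. Then D_{n+1,k,2k}(L,l,d,r,R) = ∏_{m=0}^{n} d_m^{(⌊m/k⌋)} = ∏_{j=0}^{p−1} d_j^{(0)}·d_{j+k}^{(1)}·⋯·d_{j+qk}^{(q)} · ∏_{j=p}^{k−1} d_j^{(0)}·d_{j+k}^{(1)}·⋯·d_{j+(q−1)k}^{(q−1)}, where an empty product equals 1. -/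

import Mathlib

/-- Entry function of a `k,2k`-pentadiagonal matrix. -/
noncomputable def pentaFun (k : ℕ) (L l d r R : ℕ → ℂ) (i j : ℕ) : ℂ :=
  if j + 2 * k = i then L j
  else if j + k = i then l j
  else if i = j then d i
  else if i + k = j then r i
  else if i + 2 * k = j then R i
  else 0

/-- The `m × m` `k,2k`-pentadiagonal matrix `A_{m,k,2k}(L,l,d,r,R)`. -/
noncomputable def pentaMat (m k : ℕ) (L l d r R : ℕ → ℂ) : Matrix (Fin m) (Fin m) ℂ :=
  Matrix.of fun i j => pentaFun k L l d r R i j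

/-- The iterated diagonals `(l^{(s)}, r^{(s)}, d^{(s)})` of the elimination process:
`l^{(0)} = l`, `r^{(0)} = r`, `d^{(0)} = d`, and for `s ≥ 1`,
`l_j^{(s)} = l_j^{(s-1)} - L_{j-k} r_{j-k}^{(s-1)} / d_{j-k}^{(s-1)}` for `sk ≤ j ≤ (s+1)k - 1`
and `l_j^{(s)} = l_j` otherwise; similarly for `r^{(s)}`; and
`d_j^{(s)} = d_j^{(s-1)} - l_{j-k}^{(s-1)} r_{j-k}^{(s-1)} / d_{j-k}^{(s-1)}` for
`sk ≤ j ≤ (s+1)k - 1`, `d_j^{(s)} = d_j - L_{j-2k} R_{j-2k} / d_{j-2k}^{(s-1)}` for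
`(s+1)k ≤ j ≤ (s+2)k - 1`, and `d_j^{(s)} = d_j` otherwise. -/
noncomputable def iterDiag (k : ℕ) (L l d r R : ℕ → ℂ) : ℕ → (ℕ → ℂ) × (ℕ → ℂ) × (ℕ → ℂ)
  | 0 => (l, r, d)
  | s + 1 =>
    let lp := (iterDiag k L l d r R s).1
    let rp := (iterDiag k L l d r R s).2.1
    let dp := (iterDiag k L l d r R s).2.2
    (fun j => if (s + 1) * k ≤ j ∧ j < (s + 2) * k then
        lp j - L (j - k) * rp (j - k) / dp (j - k)
      else l j,
     fun j => if (s + 1) * k ≤ j ∧ j < (s + 2) * k then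
        rp j - R (j - k) * lp (j - k) / dp (j - k)
      else r j,
     fun j => if (s + 1) * k ≤ j ∧ j < (s + 2) * k then
        dp j - lp (j - k) * rp (j - k) / dp (j - k)
      else if (s + 2) * k ≤ j ∧ j < (s + 3) * k then
        d j - L (j - 2 * k) * R (j - 2 * k) / dp (j - 2 * k)
      else d j)

/-- `l_j^{(s)}`. -/
noncomputable def lIter (k : ℕ) (L l d r R : ℕ → ℂ) (s : ℕ) : ℕ → ℂ := (iterDiag k L l d r R s).1

/-- `r_j^{(s)}`. -/
noncomputable def rIter (k : ℕ) (L l d r R : ℕ → ℂ) (s : ℕ) : ℕ → ℂ := (iterDiag k L l d r R s).2.1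

/-- `d_j^{(s)}`. -/
noncomputable def dIter (k : ℕ) (L l d r R : ℕ → ℂ) (s : ℕ) : ℕ → ℂ := (iterDiag k L l d r R s).2.2

/-- `B_s^{(l)}`: identity except entry `-l_{i-k}^{(s-1)}/d_{i-k}^{(s-1)}` at `(i, i-k)`
for `sk ≤ i ≤ min((s+1)k - 1, n)`. -/
noncomputable def Blmat (n k : ℕ) (L l d r R : ℕ → ℂ) (s : ℕ) : Matrix (Fin (n + 1)) (Fin (n + 1)) ℂ :=
  Matrix.of fun i j =>
    if (i : ℕ) = j then 1
    else if s * k ≤ (i : ℕ) ∧ (i : ℕ) < (s + 1) * k ∧ (j : ℕ) + k = i then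
      -(lIter k L l d r R (s - 1) j / dIter k L l d r R (s - 1) j)
    else 0

/-- `B_s^{(r)}`: identity except entry `-r_i^{(s-1)}/d_i^{(s-1)}` at `(i, i+k)`
for `(s-1)k ≤ i ≤ min(sk - 1, n - k)`. -/
noncomputable def Brmat (n k : ℕ) (L l d r R : ℕ → ℂ) (s : ℕ) : Matrix (Fin (n + 1)) (Fin (n + 1)) ℂ :=
  Matrix.of fun i j =>
    if (i : ℕ) = j then 1
    else if (s - 1) * k ≤ (i : ℕ) ∧ (i : ℕ) < s * k ∧ (i : ℕ) ≤ n - k ∧ (i : ℕ) + k = j then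
      -(rIter k L l d r R (s - 1) i / dIter k L l d r R (s - 1) i)
    else 0

/-- `B_s^{(L)}`: identity except entry `-L_{i-2k}/d_{i-2k}^{(s-1)}` at `(i, i-2k)`
for `(s+1)k ≤ i ≤ min((s+2)k - 1, n)`. -/
noncomputable def BLmat (n k : ℕ) (L l d r R : ℕ → ℂ) (s : ℕ) : Matrix (Fin (n + 1)) (Fin (n + 1)) ℂ :=
  Matrix.of fun i j =>
    if (i : ℕ) = j then 1
    else if (s + 1) * k ≤ (i : ℕ) ∧ (i : ℕ) < (s + 2) * k ∧ (j : ℕ) + 2 * k = i then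
      -(L j / dIter k L l d r R (s - 1) j)
    else 0

/-- `B_s^{(R)}`: identity except entry `-R_i/d_i^{(s-1)}` at `(i, i+2k)`
for `(s-1)k ≤ i ≤ min(sk - 1, n - 2k)`. -/
noncomputable def BRmat (n k : ℕ) (L l d r R : ℕ → ℂ) (s : ℕ) : Matrix (Fin (n + 1)) (Fin (n + 1)) ℂ :=
  Matrix.of fun i j =>
    if (i : ℕ) = j then 1
    else if (s - 1) * k ≤ (i : ℕ) ∧ (i : ℕ) < s * k ∧ (i : ℕ) ≤ n - 2 * k ∧
        (i : ℕ) + 2 * k = j then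
      -(R i / dIter k L l d r R (s - 1) i)
    else 0

/-- `A_0 = A_{n+1,k,2k}(L,l,d,r,R)` and
`A_s = B_s^{(L)} B_s^{(l)} A_{s-1} B_s^{(r)} B_s^{(R)}` for `s ≥ 1`. -/
noncomputable def Amat (n k : ℕ) (L l d r R : ℕ → ℂ) : ℕ → Matrix (Fin (n + 1)) (Fin (n + 1)) ℂ
  | 0 => pentaMat (n + 1) k L l d r R
  | s + 1 =>
      BLmat n k L l d r R (s + 1) * Blmat n k L l d r R (s + 1) *
        Amat n k L l d r R s * Brmat n k L l d r R (s + 1) * BRmat n k L l d r R (s + 1)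
section PentaAux

open Matrix Finset

lemma lIter_zero (k : ℕ) (L l d r R : ℕ → ℂ) : lIter k L l d r R 0 = l := rfl
lemma rIter_zero (k : ℕ) (L l d r R : ℕ → ℂ) : rIter k L l d r R 0 = r := rfl
lemma dIter_zero (k : ℕ) (L l d r R : ℕ → ℂ) : dIter k L l d r R 0 = d := rfl

lemma lIter_succ (k : ℕ) (L l d r R : ℕ → ℂ) (t j : ℕ) :
    lIter k L l d r R (t + 1) j =
      if (t + 1) * k ≤ j ∧ j < (t + 2) * k then
        lIter k L l d r R t j -
          L (j - k) * rIter k L l d r R t (j - k) / dIter k L l d r R t (j - k)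
      else l j := rfl

lemma rIter_succ (k : ℕ) (L l d r R : ℕ → ℂ) (t j : ℕ) :
    rIter k L l d r R (t + 1) j =
      if (t + 1) * k ≤ j ∧ j < (t + 2) * k then
        rIter k L l d r R t j -
          R (j - k) * lIter k L l d r R t (j - k) / dIter k L l d r R t (j - k)
      else r j := rfl

lemma dIter_succ (k : ℕ) (L l d r R : ℕ → ℂ) (t j : ℕ) :
    dIter k L l d r R (t + 1) j =
      if (t + 1) * k ≤ j ∧ j < (t + 2) * k then
        dIter k L l d r R t j -
          lIter k L l d r R t (j - k) * rIter k L l d r R t (j - k) / dIter k L l d r R t (j - k)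
      else if (t + 2) * k ≤ j ∧ j < (t + 3) * k then
        d j - L (j - 2 * k) * R (j - 2 * k) / dIter k L l d r R t (j - 2 * k)
      else d j := rfl


lemma div_mul_le' (k a : ℕ) : a / k * k ≤ a := Nat.div_mul_le_self a k

lemma lt_div_mul_add (k a : ℕ) (hk : 0 < k) : a < a / k * k + k := by
  have h1 : a % k + a / k * k = a := Nat.mod_add_div' a k
  have h2 : a % k < k := Nat.mod_lt a hk
  linarith

lemma lIter_of_ge (k : ℕ) (L l d r R : ℕ → ℂ) (t j : ℕ) (h : (t + 1) * k ≤ j) :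
    lIter k L l d r R t j = l j := by
  cases t with
  | zero => rfl
  | succ t =>
    rw [lIter_succ, if_neg]
    rintro ⟨-, h2⟩
    have e : (t + 1 + 1) * k = (t + 2) * k := by ring
    rw [e] at h
    exact absurd h (not_le.mpr h2)

lemma rIter_of_ge (k : ℕ) (L l d r R : ℕ → ℂ) (t j : ℕ) (h : (t + 1) * k ≤ j) :
    rIter k L l d r R t j = r j := by
  cases t with
  | zero => rfl
  | succ t =>
    rw [rIter_succ, if_neg]
    rintro ⟨-, h2⟩
    have e : (t + 1 + 1) * k = (t + 2) * k := by ring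
    rw [e] at h
    exact absurd h (not_le.mpr h2)

/-- `P_m = d_m^{(⌊m/k⌋)}`. -/
noncomputable def Pq (k : ℕ) (L l d r R : ℕ → ℂ) (m : ℕ) : ℂ := dIter k L l d r R (m / k) m

noncomputable def lq (k : ℕ) (L l d r R : ℕ → ℂ) (m : ℕ) : ℂ := lIter k L l d r R (m / k) m

noncomputable def rq (k : ℕ) (L l d r R : ℕ → ℂ) (m : ℕ) : ℂ := rIter k L l d r R (m / k) m

lemma Pq_lt (k : ℕ) (L l d r R : ℕ → ℂ) (m : ℕ) (hm : m < k) : Pq k L l d r R m = d m := by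
  unfold Pq; rw [Nat.div_eq_of_lt hm]; rfl

lemma lq_lt (k : ℕ) (L l d r R : ℕ → ℂ) (m : ℕ) (hm : m < k) : lq k L l d r R m = l m := by
  unfold lq; rw [Nat.div_eq_of_lt hm]; rfl

lemma rq_lt (k : ℕ) (L l d r R : ℕ → ℂ) (m : ℕ) (hm : m < k) : rq k L l d r R m = r m := by
  unfold rq; rw [Nat.div_eq_of_lt hm]; rfl

lemma lq_ge (k : ℕ) (hk : 0 < k) (L l d r R : ℕ → ℂ) (m : ℕ) (hm : k ≤ m) :
    lq k L l d r R m =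
      l m - L (m - k) * rq k L l d r R (m - k) / Pq k L l d r R (m - k) := by
  obtain ⟨a, rfl⟩ : ∃ a, m = a + k := ⟨m - k, by omega⟩
  have hb1 := div_mul_le' k a
  have hb2 := lt_div_mul_add k a hk
  have e1 : (a / k + 1) * k = a / k * k + k := by ring
  have e2 : (a / k + 2) * k = a / k * k + k + k := by ring
  unfold lq rq Pq
  rw [Nat.add_sub_cancel, Nat.add_div_right a hk, lIter_succ,
    if_pos ⟨by linarith, by linarith⟩, Nat.add_sub_cancel,
    lIter_of_ge k L l d r R _ _ (by linarith)]

lemma rq_ge (k : ℕ) (hk : 0 < k) (L l d r R : ℕ → ℂ) (m : ℕ) (hm : k ≤ m) :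
    rq k L l d r R m =
      r m - R (m - k) * lq k L l d r R (m - k) / Pq k L l d r R (m - k) := by
  obtain ⟨a, rfl⟩ : ∃ a, m = a + k := ⟨m - k, by omega⟩
  have hb1 := div_mul_le' k a
  have hb2 := lt_div_mul_add k a hk
  have e1 : (a / k + 1) * k = a / k * k + k := by ring
  have e2 : (a / k + 2) * k = a / k * k + k + k := by ring
  unfold lq rq Pq
  rw [Nat.add_sub_cancel, Nat.add_div_right a hk, rIter_succ,
    if_pos ⟨by linarith, by linarith⟩, Nat.add_sub_cancel,
    rIter_of_ge k L l d r R _ _ (by linarith)]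

lemma Pq_mid (k : ℕ) (hk : 0 < k) (L l d r R : ℕ → ℂ) (m : ℕ) (hm : k ≤ m) (hm2 : m < 2 * k) :
    Pq k L l d r R m =
      d m - lq k L l d r R (m - k) * rq k L l d r R (m - k) / Pq k L l d r R (m - k) := by
  obtain ⟨a, rfl⟩ : ∃ a, m = a + k := ⟨m - k, by omega⟩
  have ha : a < k := by omega
  unfold Pq lq rq
  rw [Nat.add_sub_cancel, Nat.add_div_right a hk, Nat.div_eq_of_lt ha, dIter_succ,
    if_pos ⟨by omega, by omega⟩, Nat.add_sub_cancel]
  rfl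

lemma Pq_big (k : ℕ) (hk : 0 < k) (L l d r R : ℕ → ℂ) (m : ℕ) (hm : 2 * k ≤ m) :
    Pq k L l d r R m =
      d m - L (m - 2 * k) * R (m - 2 * k) / Pq k L l d r R (m - 2 * k)
        - lq k L l d r R (m - k) * rq k L l d r R (m - k) / Pq k L l d r R (m - k) := by
  obtain ⟨a, rfl⟩ : ∃ a, m = a + k + k := ⟨m - 2 * k, by omega⟩
  have hb1 := div_mul_le' k a
  have hb2 := lt_div_mul_add k a hk
  have e1 : a + k + k - k = a + k := by omega
  have e2 : a + k + k - 2 * k = a := by omega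
  have f1 : (a / k + 1 + 1) * k = a / k * k + k + k := by ring
  have f2 : (a / k + 1 + 2) * k = a / k * k + k + k + k := by ring
  have f3 : (a / k + 1) * k = a / k * k + k := by ring
  have f4 : (a / k + 2) * k = a / k * k + k + k := by ring
  have f5 : (a / k + 3) * k = a / k * k + k + k + k := by ring
  unfold Pq lq rq
  rw [e1, e2, Nat.add_div_right _ hk, Nat.add_div_right _ hk]
  rw [dIter_succ, if_pos ⟨by linarith, by linarith⟩, e1]
  rw [dIter_succ, if_neg (by rintro ⟨-, h2⟩; linarith), if_pos ⟨by linarith, by linarith⟩, e2]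
noncomputable def shiftMat (m t : ℕ) (w : ℕ → ℂ) : Matrix (Fin m) (Fin m) ℂ :=
  Matrix.of fun i j => if (j : ℕ) + t = i then w j else 0

lemma shiftMat_mul (m t : ℕ) (w : ℕ → ℂ) (M : Matrix (Fin m) (Fin m) ℂ) (i j : Fin m) :
    (shiftMat m t w * M) i j =
      if h : t ≤ (i : ℕ) then
        w ((i : ℕ) - t) * M ⟨(i : ℕ) - t, Nat.lt_of_le_of_lt (Nat.sub_le _ _) i.isLt⟩ j
      else 0 := by
  rw [Matrix.mul_apply]
  by_cases h : t ≤ (i : ℕ)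
  · rw [dif_pos h]
    set a : Fin m := ⟨(i : ℕ) - t, Nat.lt_of_le_of_lt (Nat.sub_le _ _) i.isLt⟩ with ha
    have hav : (a : ℕ) = (i : ℕ) - t := rfl
    rw [Finset.sum_eq_single a]
    · have hs : shiftMat m t w i a = w ((i : ℕ) - t) := by
        simp only [shiftMat, Matrix.of_apply, hav]
        rw [if_pos (by omega)]
      rw [hs]
    · intro x _ hx
      have hxv : (x : ℕ) ≠ (i : ℕ) - t := fun hh => hx (Fin.ext (hh.trans hav.symm))
      simp only [shiftMat, Matrix.of_apply]
      rw [if_neg (by omega), zero_mul]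
    · intro hmem
      exact absurd (Finset.mem_univ _) hmem
  · rw [dif_neg h]
    apply Finset.sum_eq_zero
    intro x _
    simp only [shiftMat, Matrix.of_apply]
    rw [if_neg (by omega), zero_mul]

/-- Upper-triangular factor. -/
noncomputable def UpM (n k : ℕ) (L l d r R : ℕ → ℂ) : Matrix (Fin (n + 1)) (Fin (n + 1)) ℂ :=
  Matrix.of fun i j =>
    if (i : ℕ) = j then Pq k L l d r R i
    else if (i : ℕ) + k = j then rq k L l d r R i
    else if (i : ℕ) + 2 * k = j then R i
    else 0

/-- Lower-triangular factor. -/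
noncomputable def LowM (n k : ℕ) (L l d r R : ℕ → ℂ) : Matrix (Fin (n + 1)) (Fin (n + 1)) ℂ :=
  1 + shiftMat (n + 1) k (fun s => lq k L l d r R s / Pq k L l d r R s)
    + shiftMat (n + 1) (2 * k) (fun s => L s / Pq k L l d r R s)

lemma det_LowM (n k : ℕ) (hk : 0 < k) (L l d r R : ℕ → ℂ) :
    (LowM n k L l d r R).det = 1 := by
  have htri : (LowM n k L l d r R).BlockTriangular OrderDual.toDual := by
    intro i j hij
    have hij' : (i : ℕ) < (j : ℕ) := hij
    simp only [LowM, Matrix.add_apply, shiftMat, Matrix.of_apply, Matrix.one_apply]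
    rw [if_neg (by intro h; subst h; omega), if_neg (by omega), if_neg (by omega)]
    ring
  rw [Matrix.det_of_lowerTriangular _ htri]
  apply Finset.prod_eq_one
  intro i _
  simp only [LowM, Matrix.add_apply, shiftMat, Matrix.of_apply, Matrix.one_apply]
  rw [if_neg (by omega : ¬((i : ℕ) + k = (i : ℕ))),
    if_neg (by omega : ¬((i : ℕ) + 2 * k = (i : ℕ)))]
  simp

lemma det_UpM (n k : ℕ) (hk : 0 < k) (L l d r R : ℕ → ℂ) :
    (UpM n k L l d r R).det = ∏ i : Fin (n + 1), Pq k L l d r R i := by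
  have htri : (UpM n k L l d r R).BlockTriangular id := by
    intro i j hij
    have hij' : (j : ℕ) < (i : ℕ) := hij
    simp only [UpM, Matrix.of_apply]
    rw [if_neg (by omega), if_neg (by omega), if_neg (by omega)]
  rw [Matrix.det_of_upperTriangular htri]
  apply Finset.prod_congr rfl
  intro i _
  simp [UpM]
lemma shiftMat_mul' (m t : ℕ) (w : ℕ → ℂ) (M : Matrix (Fin m) (Fin m) ℂ) (i j x : Fin m)
    (h : (x : ℕ) + t = i) :
    (shiftMat m t w * M) i j = w x * M x j := by
  have hx : (⟨(i : ℕ) - t, Nat.lt_of_le_of_lt (Nat.sub_le _ _) i.isLt⟩ : Fin m) = x :=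
    Fin.ext (show (i : ℕ) - t = (x : ℕ) by omega)
  rw [shiftMat_mul, dif_pos (show t ≤ (i : ℕ) by omega), hx,
    show (i : ℕ) - t = (x : ℕ) by omega]

lemma shiftMat_mul_zero (m t : ℕ) (w : ℕ → ℂ) (M : Matrix (Fin m) (Fin m) ℂ) (i j : Fin m)
    (h : (i : ℕ) < t) :
    (shiftMat m t w * M) i j = 0 := by
  rw [shiftMat_mul, dif_neg (by omega)]

section UpMApply

variable {n k : ℕ} {L l d r R : ℕ → ℂ} (x y : Fin (n + 1))

lemma UpM_diag (h : (x : ℕ) = y) : UpM n k L l d r R x y = Pq k L l d r R x := by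
  simp only [UpM, Matrix.of_apply]; rw [if_pos h]

lemma UpM_sup1 (hk : 0 < k) (h : (x : ℕ) + k = y) :
    UpM n k L l d r R x y = rq k L l d r R x := by
  simp only [UpM, Matrix.of_apply]; rw [if_neg (by omega), if_pos h]

lemma UpM_sup2 (hk : 0 < k) (h : (x : ℕ) + 2 * k = y) :
    UpM n k L l d r R x y = R x := by
  simp only [UpM, Matrix.of_apply]; rw [if_neg (by omega), if_neg (by omega), if_pos h]

lemma UpM_zero (h1 : (x : ℕ) ≠ y) (h2 : (x : ℕ) + k ≠ y) (h3 : (x : ℕ) + 2 * k ≠ y) :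
    UpM n k L l d r R x y = 0 := by
  simp only [UpM, Matrix.of_apply]; rw [if_neg h1, if_neg h2, if_neg h3]

end UpMApply

section PentaFunApply

variable {k : ℕ} {L l d r R : ℕ → ℂ} (i j : ℕ)

lemma pentaFun_sub2 (h : j + 2 * k = i) : pentaFun k L l d r R i j = L j := by
  unfold pentaFun; rw [if_pos h]

lemma pentaFun_sub1 (hk : 0 < k) (h : j + k = i) : pentaFun k L l d r R i j = l j := by
  unfold pentaFun; rw [if_neg (by omega), if_pos h]

lemma pentaFun_diag (hk : 0 < k) (h : i = j) : pentaFun k L l d r R i j = d i := by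
  unfold pentaFun; rw [if_neg (by omega), if_neg (by omega), if_pos h]

lemma pentaFun_sup1 (hk : 0 < k) (h : i + k = j) : pentaFun k L l d r R i j = r i := by
  unfold pentaFun; rw [if_neg (by omega), if_neg (by omega), if_neg (by omega), if_pos h]

lemma pentaFun_sup2 (hk : 0 < k) (h : i + 2 * k = j) : pentaFun k L l d r R i j = R i := by
  unfold pentaFun
  rw [if_neg (by omega), if_neg (by omega), if_neg (by omega), if_neg (by omega), if_pos h]

lemma pentaFun_zero (h1 : j + 2 * k ≠ i) (h2 : j + k ≠ i) (h3 : i ≠ j) (h4 : i + k ≠ j)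
    (h5 : i + 2 * k ≠ j) : pentaFun k L l d r R i j = 0 := by
  unfold pentaFun
  rw [if_neg h1, if_neg h2, if_neg h3, if_neg h4, if_neg h5]

end PentaFunApply
lemma penta_factor (n k : ℕ) (hk : 1 ≤ k) (L l d r R : ℕ → ℂ)
    (hd : ∀ m ≤ n - k, Pq k L l d r R m ≠ 0) :
    pentaMat (n + 1) k L l d r R = LowM n k L l d r R * UpM n k L l d r R := by
  have hk0 : 0 < k := hk
  ext i j
  have hi : (i : ℕ) < n + 1 := i.isLt
  have hj : (j : ℕ) < n + 1 := j.isLt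
  rw [LowM, Matrix.add_mul, Matrix.add_mul, Matrix.one_mul, Matrix.add_apply, Matrix.add_apply]
  show pentaFun k L l d r R i j = _
  rcases Nat.lt_or_ge (i : ℕ) k with hik | hik
  · -- region 1 : i < k, no shift terms
    rw [shiftMat_mul_zero _ _ _ _ _ _ (by omega), shiftMat_mul_zero _ _ _ _ _ _ (by omega)]
    by_cases c3 : (i : ℕ) = (j : ℕ)
    · rw [pentaFun_diag _ _ hk0 c3, UpM_diag i j c3, Pq_lt k L l d r R _ (by omega)]
      ring
    · by_cases c4 : (i : ℕ) + k = (j : ℕ)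
      · rw [pentaFun_sup1 _ _ hk0 c4, UpM_sup1 i j hk0 c4, rq_lt k L l d r R _ (by omega)]
        ring
      · by_cases c5 : (i : ℕ) + 2 * k = (j : ℕ)
        · rw [pentaFun_sup2 _ _ hk0 c5, UpM_sup2 i j hk0 c5]
          ring
        · rw [pentaFun_zero _ _ (by omega) (by omega) c3 c4 c5,
            UpM_zero i j c3 c4 c5]
          ring
  · -- k ≤ i : first shift term present
    obtain ⟨x1, hx1⟩ : ∃ x : Fin (n + 1), (x : ℕ) = (i : ℕ) - k :=
      ⟨⟨(i : ℕ) - k, by omega⟩, rfl⟩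
    rw [shiftMat_mul' (n + 1) k _ _ i j x1 (by omega)]
    rcases Nat.lt_or_ge (i : ℕ) (2 * k) with hik2 | hik2
    · -- region 2 : k ≤ i < 2k
      rw [shiftMat_mul_zero _ _ _ _ _ _ (by omega)]
      by_cases c2 : (j : ℕ) + k = (i : ℕ)
      · have hx1j : (x1 : ℕ) = (j : ℕ) := by omega
        rw [pentaFun_sub1 _ _ hk0 c2, UpM_diag x1 j hx1j, hx1j,
          UpM_zero i j (by omega) (by omega) (by omega)]
        rw [lq_lt k L l d r R _ (by omega), div_mul_cancel₀ _ (hd _ (by omega))]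
        ring
      · by_cases c3 : (i : ℕ) = (j : ℕ)
        · rw [pentaFun_diag _ _ hk0 c3, UpM_diag i j c3, UpM_sup1 x1 j hk0 (by omega),
            Pq_mid k hk0 L l d r R _ (by omega) (by omega), hx1]
          ring
        · by_cases c4 : (i : ℕ) + k = (j : ℕ)
          · rw [pentaFun_sup1 _ _ hk0 c4, UpM_sup1 i j hk0 c4, UpM_sup2 x1 j hk0 (by omega),
              rq_ge k hk0 L l d r R _ (by omega), hx1]
            ring
          · by_cases c5 : (i : ℕ) + 2 * k = (j : ℕ)
            · rw [pentaFun_sup2 _ _ hk0 c5, UpM_sup2 i j hk0 c5,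
                UpM_zero x1 j (by omega) (by omega) (by omega)]
              ring
            · rw [pentaFun_zero _ _ (by omega) c2 c3 c4 c5, UpM_zero i j c3 c4 c5,
                UpM_zero x1 j (by omega) (by omega) (by omega)]
              ring
    · -- region 3 : 2k ≤ i, both shift terms present
      obtain ⟨x2, hx2⟩ : ∃ x : Fin (n + 1), (x : ℕ) = (i : ℕ) - 2 * k :=
        ⟨⟨(i : ℕ) - 2 * k, by omega⟩, rfl⟩
      rw [shiftMat_mul' (n + 1) (2 * k) _ _ i j x2 (by omega)]
      by_cases c1 : (j : ℕ) + 2 * k = (i : ℕ)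
      · have hx2j : (x2 : ℕ) = (j : ℕ) := by omega
        rw [pentaFun_sub2 _ _ c1, UpM_diag x2 j hx2j, hx2j,
          UpM_zero i j (by omega) (by omega) (by omega),
          UpM_zero x1 j (by omega) (by omega) (by omega),
          div_mul_cancel₀ _ (hd _ (by omega))]
        ring
      · by_cases c2 : (j : ℕ) + k = (i : ℕ)
        · have hx1j : (x1 : ℕ) = (j : ℕ) := by omega
          rw [pentaFun_sub1 _ _ hk0 c2, UpM_diag x1 j hx1j, hx1j,
            UpM_zero i j (by omega) (by omega) (by omega),
            UpM_sup1 x2 j hk0 (by omega), hx2,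
            show (i : ℕ) - 2 * k = (j : ℕ) - k by omega,
            div_mul_cancel₀ _ (hd _ (by omega)),
            lq_ge k hk0 L l d r R _ (by omega : k ≤ (j : ℕ))]
          ring
        · by_cases c3 : (i : ℕ) = (j : ℕ)
          · rw [pentaFun_diag _ _ hk0 c3, UpM_diag i j c3, UpM_sup1 x1 j hk0 (by omega),
              UpM_sup2 x2 j hk0 (by omega),
              Pq_big k hk0 L l d r R _ (by omega), hx1, hx2]
            ring
          · by_cases c4 : (i : ℕ) + k = (j : ℕ)
            · rw [pentaFun_sup1 _ _ hk0 c4, UpM_sup1 i j hk0 c4,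
                UpM_sup2 x1 j hk0 (by omega),
                UpM_zero x2 j (by omega) (by omega) (by omega),
                rq_ge k hk0 L l d r R _ (by omega), hx1]
              ring
            · by_cases c5 : (i : ℕ) + 2 * k = (j : ℕ)
              · rw [pentaFun_sup2 _ _ hk0 c5, UpM_sup2 i j hk0 c5,
                  UpM_zero x1 j (by omega) (by omega) (by omega),
                  UpM_zero x2 j (by omega) (by omega) (by omega)]
                ring
              · rw [pentaFun_zero _ _ c1 c2 c3 c4 c5, UpM_zero i j c3 c4 c5,
                  UpM_zero x1 j (by omega) (by omega) (by omega),
                  UpM_zero x2 j (by omega) (by omega) (by omega)]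
                ring
end PentaAux


/-- Theorem 5: if `n + 1 = kq + p` with `0 ≤ p < k` and either `q = 3, p > 0` or `q > 3`,
then the determinant of `A_{n+1,k,2k}(L,l,d,r,R)` equals the product of all iterated
diagonal entries `d_m^{(⌊m/k⌋)}`, which can also be grouped as the stated double product. -/
theorem det_penta_eq_prod_dIter (n k q p : ℕ) (hk : 1 ≤ k) (h2k : 2 * k ≤ n)
    (hqp : n + 1 = k * q + p) (hpk : p < k) (hcase : (q = 3 ∧ 0 < p) ∨ 3 < q)
    (L l d r R : ℕ → ℂ)
    (hd : ∀ m ≤ n - k, dIter k L l d r R (m / k) m ≠ 0) :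
    (pentaMat (n + 1) k L l d r R).det =
        ∏ m ∈ Finset.range (n + 1), dIter k L l d r R (m / k) m ∧
    (pentaMat (n + 1) k L l d r R).det =
        (∏ j ∈ Finset.range p, ∏ s ∈ Finset.range (q + 1), dIter k L l d r R s (j + s * k)) *
        ∏ j ∈ Finset.Ico p k, ∏ s ∈ Finset.range q, dIter k L l d r R s (j + s * k) := by
  have hk0 : 0 < k := hk
  have hd' : ∀ m ≤ n - k, Pq k L l d r R m ≠ 0 := hd
  have part1 : (pentaMat (n + 1) k L l d r R).det =
      ∏ m ∈ Finset.range (n + 1), dIter k L l d r R (m / k) m := by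
    rw [penta_factor n k hk L l d r R hd', Matrix.det_mul, det_LowM n k hk0, det_UpM n k hk0,
      one_mul, ← Fin.prod_univ_eq_prod_range (fun m => dIter k L l d r R (m / k) m) (n + 1)]
    rfl
  refine ⟨part1, ?_⟩
  rw [part1]
  symm
  rw [← Finset.prod_product', ← Finset.prod_product',
    ← Finset.prod_union (by
      rw [Finset.disjoint_left]
      rintro ⟨a, b⟩ hab hab'
      rw [Finset.mem_product, Finset.mem_range] at hab
      rw [Finset.mem_product, Finset.mem_Ico] at hab'
      omega)]
  refine Finset.prod_nbij' (fun x => x.1 + x.2 * k) (fun m => (m % k, m / k)) ?_ ?_ ?_ ?_ ?_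
  · -- maps into range (n+1)
    rintro ⟨a, b⟩ hab
    rw [Finset.mem_union, Finset.mem_product, Finset.mem_product, Finset.mem_range,
      Finset.mem_range, Finset.mem_range, Finset.mem_Ico] at hab
    rw [Finset.mem_range]
    have hkq : k * q = q * k := Nat.mul_comm k q
    rcases hab with ⟨ha, hb⟩ | ⟨ha, hb⟩
    · have : b * k ≤ q * k := Nat.mul_le_mul_right k (by omega)
      simp only
      linarith
    · have : (b + 1) * k ≤ q * k := Nat.mul_le_mul_right k (by omega)
      have hbk : (b + 1) * k = b * k + k := by ring
      simp only
      linarith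
  · -- inverse maps into S
    intro m hm
    rw [Finset.mem_range] at hm
    have hmod : m % k < k := Nat.mod_lt m hk0
    have hdm : m % k + m / k * k = m := Nat.mod_add_div' m k
    set u := m / k with hu
    set v := m % k with hv
    rw [Finset.mem_union, Finset.mem_product, Finset.mem_product, Finset.mem_range,
      Finset.mem_range, Finset.mem_range, Finset.mem_Ico]
    have hkq : k * q = q * k := Nat.mul_comm k q
    by_cases hp : v < p
    · left
      refine ⟨hp, ?_⟩
      show u < q + 1
      by_contra hcon
      have hq : q + 1 ≤ u := by omega
      have h5 : (q + 1) * k ≤ u * k := Nat.mul_le_mul_right k hq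
      have h1 : (q + 1) * k = q * k + k := by ring
      linarith
    · right
      refine ⟨⟨by omega, hmod⟩, ?_⟩
      show u < q
      by_contra hcon
      have hq : q ≤ u := by omega
      have h5 : q * k ≤ u * k := Nat.mul_le_mul_right k hq
      linarith
  · -- left inverse
    rintro ⟨a, b⟩ hab
    rw [Finset.mem_union, Finset.mem_product, Finset.mem_product, Finset.mem_range,
      Finset.mem_range, Finset.mem_range, Finset.mem_Ico] at hab
    have ha : a < k := by rcases hab with ⟨ha, -⟩ | ⟨ha, -⟩ <;> omega
    have h1 : (a + b * k) % k = a := by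
      rw [Nat.add_mul_mod_self_right, Nat.mod_eq_of_lt ha]
    have h2 : (a + b * k) / k = b := by
      rw [Nat.add_mul_div_right _ _ hk0, Nat.div_eq_of_lt ha]
      omega
    simp only [h1, h2]
  · -- right inverse
    intro m hm
    simp only
    exact Nat.mod_add_div' m k
  · -- values agree
    rintro ⟨a, b⟩ hab
    rw [Finset.mem_union, Finset.mem_product, Finset.mem_product, Finset.mem_range,
      Finset.mem_range, Finset.mem_range, Finset.mem_Ico] at hab
    have ha : a < k := by rcases hab with ⟨ha, -⟩ | ⟨ha, -⟩ <;> omega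
    have h2 : (a + b * k) / k = b := by
      rw [Nat.add_mul_div_right _ _ hk0, Nat.div_eq_of_lt ha]
      omega
    simp only [h2]
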